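/- arXiv:math/0701135 — 6 statements merged into one kernel-verified Lean document; each statement's English description precedes it below -/
import Mathlib

section
/- Define sequences A_n, B_n by the recurrences (2n+1)A_n - 2n(1+k^2)A_{n-1} + (2n-1)k^2 A_{n-2} = 0 and (2n+1)B_n - 2n(1+k^2)B_{n-1} + (2n-1)k^2 B_{n-2} = 0 with initial conditions A_{-1}=0, A_0=1, B_{-1}=-1, B_0=0. Then for all n ≥ 0, B_n A_{n-1} - A_n B_{n-1} = k^{2n}/(2n+1). -/
/-! The Casoratian `W n = B n * A (n - 1) - A n * B (n - 1)` of two solutions of a three-term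
recurrence `p n x n - q n x (n - 1) + r n x (n - 2) = 0` satisfies the first-order recurrence
`p n W n = r n W (n - 1)`. Here `p n = 2n + 1` and `r n = (2n - 1) k²`, so `(2n + 1) W n` is
multiplied by `k²` at each step, and `W 0 = 1` by the initial conditions. -/

def casoratian {R : Type*} [CommRing R] (A B : ℤ → R) (n : ℤ) : R :=
  B n * A (n - 1) - A n * B (n - 1)

theorem casoratian_three_term {R : Type*} [CommRing R] {A B p q r : ℤ → R} {n : ℤ}
    (hA : p n * A n - q n * A (n - 1) + r n * A (n - 2) = 0)
    (hB : p n * B n - q n * B (n - 1) + r n * B (n - 2) = 0) :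
    p n * casoratian A B n = r n * casoratian A B (n - 1) := by
  rw [casoratian, casoratian, show n - 1 - 1 = n - 2 by ring]
  linear_combination A (n - 1) * hB - B (n - 1) * hA

theorem eq_pow_div_two_mul_add_one {K : Type*} [Field K] [CharZero K] {c : K} {W : ℕ → K}
    (h0 : W 0 = 1) (hW : ∀ n : ℕ, (2 * (n + 1 : K) + 1) * W (n + 1) = (2 * n + 1) * c * W n)
    (n : ℕ) : W n = c ^ n / (2 * n + 1) := by
  have hodd (m : ℕ) : (2 * (m : K) + 1) ≠ 0 := by exact_mod_cast (2 * m).succ_ne_zero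
  induction n with
  | zero => simp [h0]
  | succ n ih =>
    have hstep := hW n
    rw [ih] at hstep
    field_simp [hodd n] at hstep
    rw [eq_div_iff (hodd (n + 1))]
    push_cast
    linear_combination hstep

theorem wronskian_identity (k : ℝ) (A B : ℤ → ℝ)
    (hA0 : A (-1) = 0) (hA1 : A 0 = 1) (hB0 : B (-1) = -1) (hB1 : B 0 = 0)
    (hArec : ∀ n : ℤ, 1 ≤ n →
      (2 * (n : ℝ) + 1) * A n - 2 * n * (1 + k ^ 2) * A (n - 1)
        + (2 * n - 1) * k ^ 2 * A (n - 2) = 0)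
    (hBrec : ∀ n : ℤ, 1 ≤ n →
      (2 * (n : ℝ) + 1) * B n - 2 * n * (1 + k ^ 2) * B (n - 1)
        + (2 * n - 1) * k ^ 2 * B (n - 2) = 0) :
    ∀ n : ℕ, B n * A ((n : ℤ) - 1) - A n * B ((n : ℤ) - 1)
      = k ^ (2 * n) / (2 * (n : ℝ) + 1) := by
  intro n
  have h0 : casoratian A B 0 = 1 := by simp [casoratian, hA0, hA1, hB0, hB1]
  have hstep (m : ℕ) : (2 * (m + 1 : ℝ) + 1) * casoratian A B (m + 1)
      = (2 * m + 1) * k ^ 2 * casoratian A B m := by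
    have hm : (1 : ℤ) ≤ m + 1 := by omega
    have := casoratian_three_term (p := fun n : ℤ ↦ 2 * (n : ℝ) + 1)
      (q := fun n : ℤ ↦ 2 * n * (1 + k ^ 2)) (r := fun n : ℤ ↦ (2 * n - 1) * k ^ 2)
      (hArec _ hm) (hBrec _ hm)
    push_cast at this
    rw [add_sub_cancel_right] at this
    linear_combination this
  rw [pow_mul]
  exact eq_pow_div_two_mul_add_one (W := fun m : ℕ ↦ casoratian A B m) h0
    (by exact_mod_cast hstep) n
end

section
/- Let P_n(z) be defined by P_{-1}=0, P_0=1 and P_{n+1}(z) - P_n(z) = z(P_n(z) - ((n+1/2)^2/(n(n+1))) P_{n-1}(z)). Then P_n satisfies the reciprocal-invariance property z^n P_n(1/z) = P_n(z) for all n ≥ 0 and all z ≠ 0. -/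
/-!
Written as `P (n + 2) z = (1 + z) P (n + 1) z - z b_n P n z`, the recurrence is palindromic in `z`:
multiplying it at `1 / z` by `z ^ (n + 2)` shows that `Q n z = z ^ n P n (1 / z)` satisfies the same
recurrence, and `Q 0 = P 0`, `Q 1 = P 1`. Hence `Q = P`, whatever the coefficients `b_n` are.
-/

section ReciprocalInvariance

variable {K : Type*} [Field K] {P : ℕ → K → K} {b : ℕ → K}

theorem pow_mul_apply_inv_recurrence
    (hrec : ∀ n z, P (n + 2) z = (1 + z) * P (n + 1) z - z * b n * P n z)
    (n : ℕ) {z : K} (hz : z ≠ 0) :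
    z ^ (n + 2) * P (n + 2) z⁻¹
      = (1 + z) * (z ^ (n + 1) * P (n + 1) z⁻¹) - z * b n * (z ^ n * P n z⁻¹) := by
  rw [hrec]
  field_simp
  ring

theorem pow_mul_apply_inv_eq_of_recurrence
    (h0 : ∀ z, P 0 z = 1) (h1 : ∀ z, P 1 z = 1 + z)
    (hrec : ∀ n z, P (n + 2) z = (1 + z) * P (n + 1) z - z * b n * P n z)
    (n : ℕ) {z : K} (hz : z ≠ 0) :
    z ^ n * P n z⁻¹ = P n z := by
  induction n using Nat.twoStepInduction with
  | zero => simp [h0]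
  | one =>
    rw [h1, h1, pow_one, mul_add, mul_inv_cancel₀ hz, mul_one, add_comm]
  | more n ih ih' =>
    rw [pow_mul_apply_inv_recurrence hrec n hz, ih, ih', hrec]

end ReciprocalInvariance

theorem hermite_LBP_reciprocal_invariance (P : ℕ → ℝ → ℝ)
    (h0 : ∀ z : ℝ, P 0 z = 1)
    (h1 : ∀ z : ℝ, P 1 z - P 0 z = z * P 0 z)
    (hrec : ∀ n : ℕ, ∀ z : ℝ,
      P (n + 2) z - P (n + 1) z
        = z * (P (n + 1) z -
            ((((n : ℝ) + 1) + 1 / 2) ^ 2 / (((n : ℝ) + 1) * ((n : ℝ) + 2))) * P n z)) :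
    ∀ n : ℕ, ∀ z : ℝ, z ≠ 0 → z ^ n * P n (1 / z) = P n z := by
  intro n z hz
  rw [one_div]
  refine pow_mul_apply_inv_eq_of_recurrence
    (b := fun n : ℕ => (((n : ℝ) + 1) + 1 / 2) ^ 2 / (((n : ℝ) + 1) * ((n : ℝ) + 2)))
    h0 (fun z => ?_) (fun n z => ?_) n hz
  · linear_combination h1 z + (1 + z) * h0 z
  · linear_combination hrec n z
end

section
/- Suppose P_n(z) are monic Laurent biorthogonal polynomials satisfying P_{n+1}(z) + d_n P_n(z) = z(P_n(z) + b_n P_{n-1}(z)) with P_{-1}=0, P_0=1, b_n d_n ≠ 0. If d_n = -1 for all n ≥ 0, then z^n P_n(1/z) = P_n(z) for all n and z ≠ 0. Conversely, if z^n P_n(1/z) = P_n(z) holds for all n and z ≠ 0, then d_n = -1 for all n. -/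
open Polynomial

noncomputable def lbpQ (b d : ℕ → ℝ) : ℕ → Polynomial ℝ
  | 0 => 1
  | 1 => X - C (d 0)
  | (n+2) => X * (lbpQ b d (n+1) + C (b (n+1)) * lbpQ b d n)
      - C (d (n+1)) * lbpQ b d (n+1)

lemma lbp_degree_C_mul_le (a : ℝ) (p : Polynomial ℝ) : (C a * p).degree ≤ p.degree := by
  refine (degree_mul_le _ _).trans ?_
  refine (add_le_add (show (C a).degree ≤ 0 from degree_C_le) (le_refl p.degree)).trans ?_
  simp

lemma lbpQ_monic (b d : ℕ → ℝ) :
    ∀ n, (lbpQ b d n).Monic ∧ (lbpQ b d n).natDegree = n := by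
  intro n
  induction n using Nat.twoStepInduction with
  | zero => exact ⟨monic_one, natDegree_one⟩
  | one => exact ⟨monic_X_sub_C _, natDegree_X_sub_C _⟩
  | more n ih ih1 =>
    obtain ⟨hm, hdeg⟩ := ih
    obtain ⟨hm1, hdeg1⟩ := ih1
    set A := lbpQ b d (n+1) with hA
    set B := lbpQ b d n with hB
    have hdA : A.degree = ((n+1 : ℕ) : WithBot ℕ) := by
      rw [degree_eq_natDegree hm1.ne_zero, hdeg1]
    have hdB : B.degree = ((n : ℕ) : WithBot ℕ) := by
      rw [degree_eq_natDegree hm.ne_zero, hdeg]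
    have hlt : (C (b (n+1)) * B).degree < A.degree := by
      refine lt_of_le_of_lt (lbp_degree_C_mul_le _ _) ?_
      rw [hdA, hdB]
      exact_mod_cast Nat.lt_succ_self n
    have hmsum : (A + C (b (n+1)) * B).Monic := hm1.add_of_left hlt
    have hdsum : (A + C (b (n+1)) * B).degree = ((n+1 : ℕ) : WithBot ℕ) := by
      rw [degree_add_eq_left_of_degree_lt hlt, hdA]
    have hmX : (X * (A + C (b (n+1)) * B)).Monic := monic_X.mul hmsum
    have hdX : (X * (A + C (b (n+1)) * B)).degree = ((n+2 : ℕ) : WithBot ℕ) := by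
      rw [degree_mul, degree_X, hdsum]
      norm_cast
      omega
    have hlt2 : (-(C (d (n+1)) * A)).degree < (X * (A + C (b (n+1)) * B)).degree := by
      rw [degree_neg, hdX]
      refine lt_of_le_of_lt (lbp_degree_C_mul_le _ _) ?_
      rw [hdA]
      exact_mod_cast Nat.lt_succ_self (n+1)
    have hmfin : (lbpQ b d (n+2)).Monic := by
      rw [lbpQ, sub_eq_add_neg]
      exact hmX.add_of_left hlt2
    constructor
    · exact hmfin
    · have hdfin : (lbpQ b d (n+2)).degree = ((n+2 : ℕ) : WithBot ℕ) := by
        rw [lbpQ, sub_eq_add_neg, degree_add_eq_left_of_degree_lt hlt2, hdX]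
      exact natDegree_eq_of_degree_eq_some hdfin

lemma lbpQ_eval (P : ℕ → ℝ → ℝ) (b d : ℕ → ℝ)
    (h0 : ∀ z : ℝ, P 0 z = 1)
    (h1 : ∀ z : ℝ, P 1 z + d 0 * P 0 z = z * P 0 z)
    (hrec : ∀ n : ℕ, ∀ z : ℝ,
      P (n + 2) z + d (n + 1) * P (n + 1) z
        = z * (P (n + 1) z + b (n + 1) * P n z)) :
    ∀ n z, P n z = (lbpQ b d n).eval z := by
  intro n
  induction n using Nat.twoStepInduction with
  | zero => intro z; simp [lbpQ, h0]
  | one =>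
    intro z
    have := h1 z
    rw [h0] at this
    simp only [lbpQ, eval_sub, eval_X, eval_C]
    linarith
  | more n ih ih1 =>
    intro z
    have := hrec n z
    rw [ih z, ih1 z] at this
    simp only [lbpQ, eval_sub, eval_mul, eval_add, eval_X, eval_C]
    linarith

lemma lbp_exists_point (p : Polynomial ℝ) (hp : p ≠ 0) :
    ∃ z : ℝ, z ≠ 0 ∧ z ≠ 1 ∧ p.eval z ≠ 0 := by
  have hfin : ({x : ℝ | p.IsRoot x} ∪ {0, 1}).Finite :=
    (Polynomial.finite_setOf_isRoot hp).union ((Set.finite_singleton (1:ℝ)).insert 0)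
  obtain ⟨z, hz⟩ := hfin.infinite_compl.nonempty
  simp only [Set.mem_compl_iff, Set.mem_union, Set.mem_setOf_eq, Set.mem_insert_iff,
    Set.mem_singleton_iff, not_or] at hz
  exact ⟨z, hz.2.1, hz.2.2, hz.1⟩

theorem LBP_reciprocal_invariance_iff (P : ℕ → ℝ → ℝ) (b d : ℕ → ℝ)
    (h0 : ∀ z : ℝ, P 0 z = 1)
    (h1 : ∀ z : ℝ, P 1 z + d 0 * P 0 z = z * P 0 z)
    (hrec : ∀ n : ℕ, ∀ z : ℝ,
      P (n + 2) z + d (n + 1) * P (n + 1) z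
        = z * (P (n + 1) z + b (n + 1) * P n z))
    (hnondeg : ∀ n : ℕ, 1 ≤ n → b n * d n ≠ 0) :
    ((∀ n : ℕ, d n = -1) →
        ∀ n : ℕ, ∀ z : ℝ, z ≠ 0 → z ^ n * P n (1 / z) = P n z) ∧
    ((∀ n : ℕ, ∀ z : ℝ, z ≠ 0 → z ^ n * P n (1 / z) = P n z) →
        ∀ n : ℕ, d n = -1) := by
  have hp1 : ∀ y : ℝ, P 1 y = y - d 0 := by
    intro y
    have := h1 y
    rw [h0] at this
    linarith
  constructor
  · -- forward direction
    intro hd n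
    induction n using Nat.twoStepInduction with
    | zero => intro z hz; simp [h0]
    | one =>
      intro z hz
      rw [hp1, hp1, hd 0]
      field_simp
      ring
    | more n ih ih1 =>
      intro z hz
      have hw : z * (1/z) = 1 := by field_simp
      have hE := hrec n (1/z)
      have hR := hrec n z
      have hS0 := ih z hz
      have hS1 := ih1 z hz
      linear_combination (1-z) * P (n+1) z * hd (n+1) - hR + z^(n+2) * hE
        - (d (n+1) * z - 1) * hS1 + b (n+1) * z * hS0
        + (z^(n+1) * P (n+1) (1/z) + b (n+1) * z^(n+1) * P n (1/z)) * hw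
  · -- converse
    intro hsym n
    match n with
    | 0 =>
      have := hsym 1 2 (by norm_num)
      rw [hp1, hp1] at this
      norm_num at this
      linarith
    | (n+1) =>
      have hQ : lbpQ b d (n+1) ≠ 0 := (lbpQ_monic b d (n+1)).1.ne_zero
      obtain ⟨z, hz0, hz1, hzP⟩ := lbp_exists_point _ hQ
      have hPz : P (n+1) z ≠ 0 := by
        rw [lbpQ_eval P b d h0 h1 hrec (n+1) z]
        exact hzP
      have hw : z * (1/z) = 1 := by field_simp
      have hE := hrec n (1/z)
      have hR := hrec n z
      have hS0 := hsym n z hz0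
      have hS1 := hsym (n+1) z hz0
      have hS2 := hsym (n+2) z hz0
      have key : (d (n+1) + 1) * (1 - z) * P (n+1) z = 0 := by
        linear_combination hR - z^(n+2) * hE + hS2 + (d (n+1) * z - 1) * hS1
          - b (n+1) * z * hS0
          - (z^(n+1) * P (n+1) (1/z) + b (n+1) * z^(n+1) * P n (1/z)) * hw
      have h1z : (1 : ℝ) - z ≠ 0 := by
        intro h; apply hz1; linarith
      have := mul_ne_zero h1z hPz
      rcases mul_eq_zero.mp key with h | h
      · rcases mul_eq_zero.mp h with h' | h'
        · linarith
        · exact absurd h' h1z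
      · exact absurd h hPz
end

section
/- Let A_n and B_n satisfy (2n+1)X_n - 4n X_{n-1} + (2n-1)X_{n-2} = 0 with A_{-1}=0, A_0=1, B_{-1}=-1, B_0=0 (the case z=1). Then A_n = G_n and B_n = G_n - 1, where G_n = Σ_{s=0}^n 1/(2s+1). -/
/-!
The recurrence can be rewritten as
`(2n+1)(X_n - X_{n-1}) = (2n-1)(X_{n-1} - X_{n-2})`, so `(2n+1)(X_n - X_{n-1})` is constant,
equal to `X_0 - X_{-1}`. Summing the increments `(X_0 - X_{-1}) / (2n+1)` gives
`X_n = X_{-1} + (X_0 - X_{-1}) G_n`, and both initial conditions have `X_0 - X_{-1} = 1`.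
-/

/-- G_n = Σ_{s=0}^n 1/(2s+1). -/
noncomputable def Gsum (n : ℕ) : ℝ :=
  ∑ s ∈ Finset.range (n + 1), (1 : ℝ) / (2 * s + 1)

lemma Gsum_zero : Gsum 0 = 1 := by
  simp [Gsum]

lemma Gsum_succ (n : ℕ) : Gsum (n + 1) = Gsum n + 1 / (2 * (n + 1) + 1) := by
  simp [Gsum, Finset.sum_range_succ]

def HermiteRecurrence (X : ℤ → ℝ) : Prop :=
  ∀ n : ℤ, 1 ≤ n → (2 * (n : ℝ) + 1) * X n - 4 * n * X (n - 1) + (2 * n - 1) * X (n - 2) = 0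

namespace HermiteRecurrence

variable {X : ℤ → ℝ}

lemma mul_sub_eq (hX : HermiteRecurrence X) (n : ℕ) :
    (2 * n + 1) * (X n - X (n - 1)) = X 0 - X (-1) := by
  induction n with
  | zero => simp
  | succ k ih =>
    have hrec := hX (k + 1) (by omega)
    rw [show ((k : ℤ) + 1 - 1) = k by ring, show ((k : ℤ) + 1 - 2) = k - 1 by ring] at hrec
    push_cast at hrec ⊢
    rw [show ((k : ℤ) + 1 - 1) = k by ring]
    linear_combination hrec + ih

lemma eq_add_mul_Gsum (hX : HermiteRecurrence X) (n : ℕ) :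
    X n = X (-1) + (X 0 - X (-1)) * Gsum n := by
  induction n with
  | zero => simp [Gsum_zero]
  | succ k ih =>
    have hstep : X (k + 1) - X k = (X 0 - X (-1)) / (2 * (k + 1) + 1) := by
      rw [eq_div_iff (by positivity), mul_comm]
      simpa using hX.mul_sub_eq (k + 1)
    push_cast
    rw [Gsum_succ]
    linear_combination ih + hstep

end HermiteRecurrence

theorem AB_at_one (A B : ℤ → ℝ)
    (hA0 : A (-1) = 0) (hA1 : A 0 = 1) (hB0 : B (-1) = -1) (hB1 : B 0 = 0)
    (hArec : ∀ n : ℤ, 1 ≤ n →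
      (2 * (n : ℝ) + 1) * A n - 4 * n * A (n - 1) + (2 * n - 1) * A (n - 2) = 0)
    (hBrec : ∀ n : ℤ, 1 ≤ n →
      (2 * (n : ℝ) + 1) * B n - 4 * n * B (n - 1) + (2 * n - 1) * B (n - 2) = 0) :
    ∀ n : ℕ, A n = Gsum n ∧ B n = Gsum n - 1 := by
  intro n
  have hA : A n = A (-1) + (A 0 - A (-1)) * Gsum n :=
    HermiteRecurrence.eq_add_mul_Gsum hArec n
  have hB : B n = B (-1) + (B 0 - B (-1)) * Gsum n :=
    HermiteRecurrence.eq_add_mul_Gsum hBrec n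
  rw [hA0, hA1] at hA
  rw [hB0, hB1] at hB
  constructor
  · linear_combination hA
  · linear_combination hB
end

section
/- Let P_n(z) be monic polynomials satisfying P_{n+1}(z) - P_n(z) = z(P_n(z) + b_n P_{n-1}(z)) with P_0 = 1, P_{-1} = 0 and z^n P_n(1/z) = P_n(z). Define S_n(x) = z^{-n/2} P_n(z) where x = z^{1/2} + z^{-1/2}. Then S_n is a monic polynomial in x of degree n satisfying S_{n+1}(x) + u_n S_{n-1}(x) = x S_n(x) with u_n = -b_n. -/
open Polynomial

noncomputable def SauxLBP (b : ℕ → ℝ) : ℕ → Polynomial ℝ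
  | 0 => 1
  | 1 => X
  | (n+2) => X * SauxLBP b (n+1) + C (b (n+1)) * SauxLBP b n

lemma SauxLBP_monic_deg (b : ℕ → ℝ) : ∀ n : ℕ,
    (SauxLBP b n).Monic ∧ (SauxLBP b n).natDegree = n := by
  intro n
  induction n using Nat.twoStepInduction with
  | zero => exact ⟨monic_one, natDegree_one⟩
  | one => exact ⟨monic_X, natDegree_X⟩
  | more n ih1 ih2 =>
    obtain ⟨hm1, hd1⟩ := ih1
    obtain ⟨hm2, hd2⟩ := ih2
    have hmX : (X * SauxLBP b (n+1)).Monic := monic_X.mul hm2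
    have hdX : (X * SauxLBP b (n+1)).natDegree = n + 2 := by
      rw [natDegree_mul X_ne_zero hm2.ne_zero, natDegree_X, hd2]; ring
    have hlt : (C (b (n+1)) * SauxLBP b n).degree < (X * SauxLBP b (n+1)).degree := by
      apply lt_of_le_of_lt (degree_mul_le _ _)
      rw [degree_eq_natDegree hmX.ne_zero, hdX]
      apply lt_of_le_of_lt (add_le_add degree_C_le (degree_le_natDegree))
      rw [hd1]
      rw [zero_add]
      exact_mod_cast Nat.lt_succ_of_lt (Nat.lt_succ_self n)
    constructor
    · exact hmX.add_of_left hlt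
    · show (X * SauxLBP b (n+1) + C (b (n+1)) * SauxLBP b n).natDegree = n + 2
      rw [natDegree_eq_of_degree_eq (degree_add_eq_left_of_degree_lt hlt), hdX]

theorem symmetric_polynomials_from_reciprocal_LBP
    (P : ℕ → Polynomial ℝ) (b : ℕ → ℝ)
    (hmonic : ∀ n : ℕ, (P n).Monic) (hdeg : ∀ n : ℕ, (P n).natDegree = n)
    (h0 : P 0 = 1)
    (h1 : ∀ z : ℝ, (P 1).eval z - (P 0).eval z = z * (P 0).eval z)
    (hrec : ∀ n : ℕ, ∀ z : ℝ,
      (P (n + 2)).eval z - (P (n + 1)).eval z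
        = z * ((P (n + 1)).eval z + b (n + 1) * (P n).eval z))
    (hrecip : ∀ n : ℕ, ∀ z : ℝ, z ≠ 0 → z ^ n * (P n).eval (1 / z) = (P n).eval z) :
    ∃ S : ℕ → Polynomial ℝ,
      (∀ n : ℕ, (S n).Monic ∧ (S n).natDegree = n) ∧
      -- S_n(x) = z^{-n/2} P_n(z) with x = z^{1/2} + z^{-1/2}
      (∀ n : ℕ, ∀ z : ℝ, 0 < z →
        (S n).eval (Real.sqrt z + (Real.sqrt z)⁻¹)
          = (P n).eval z / Real.sqrt z ^ n) ∧
      -- the three-term recurrence S_{n+1} + u_n S_{n-1} = x S_n with u_n = -b_n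
      (∀ n : ℕ, S (n + 2) + C (-(b (n + 1))) * S n = X * S (n + 1)) := by
  refine ⟨SauxLBP b, SauxLBP_monic_deg b, ?_, ?_⟩
  · intro n
    induction n using Nat.twoStepInduction with
    | zero =>
      intro z hz
      have hs : Real.sqrt z ≠ 0 := (Real.sqrt_pos.mpr hz).ne'
      simp [SauxLBP, h0]
    | one =>
      intro z hz
      have hs : Real.sqrt z ≠ 0 := (Real.sqrt_pos.mpr hz).ne'
      have hzz : Real.sqrt z * Real.sqrt z = z := Real.mul_self_sqrt hz.le
      have hP1 : (P 1).eval z = 1 + z := by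
        have := h1 z; rw [h0] at this; simp at this; linarith
      simp only [SauxLBP, eval_X, hP1, pow_one]
      field_simp
      linarith [hzz]
    | more n ih1 ih2 =>
      intro z hz
      have hs : Real.sqrt z ≠ 0 := (Real.sqrt_pos.mpr hz).ne'
      have hzz : Real.sqrt z * Real.sqrt z = z := Real.mul_self_sqrt hz.le
      have hP : (P (n+2)).eval z = (1 + z) * (P (n+1)).eval z + z * (b (n+1) * (P n).eval z) := by
        have := hrec n z; linarith
      simp only [SauxLBP, eval_add, eval_mul, eval_X, eval_C, ih1 z hz, ih2 z hz, hP]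
      field_simp
      linear_combination (Real.sqrt z ^ (n * 2) * Real.sqrt z ^ 2 * b (n + 1) * (P n).eval z
          + Real.sqrt z ^ 2 * Real.sqrt z ^ (n * 2) * (P (n + 1)).eval z) *
        Real.sq_sqrt hz.le
  · intro n
    show X * SauxLBP b (n+1) + C (b (n+1)) * SauxLBP b n + C (-(b (n + 1))) * SauxLBP b n
        = X * SauxLBP b (n+1)
    rw [map_neg]
    ring
end

section
/- Let A_n^{(j)}(z) be defined by A_{-1}^{(j)} = 0, A_0^{(j)} = 1 and (n+3/2+j)A_{n+1}^{(j)} = (n+j+1)(z+1)A_n^{(j)} - z(n+j+1/2)A_{n-1}^{(j)}. Then A_n^{(j)}(1) = G_n(j) where G_n(j) = (2j+1) Σ_{s=0}^n 1/(2s+2j+1). -/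
theorem associated_A_at_one (j : ℕ) (A : ℤ → ℝ → ℝ)
    (hm1 : ∀ z : ℝ, A (-1) z = 0) (h0 : ∀ z : ℝ, A 0 z = 1)
    (hrec : ∀ n : ℤ, 0 ≤ n → ∀ z : ℝ,
      ((n : ℝ) + 3 / 2 + (j : ℝ)) * A (n + 1) z
        = ((n : ℝ) + (j : ℝ) + 1) * (z + 1) * A n z
          - z * ((n : ℝ) + (j : ℝ) + 1 / 2) * A (n - 1) z) :
    ∀ n : ℕ, A (n : ℤ) 1
      = (2 * (j : ℝ) + 1) * ∑ s ∈ Finset.range (n + 1),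
          (1 : ℝ) / (2 * (s : ℝ) + 2 * (j : ℝ) + 1) := by
  have hj : (2 * (j:ℝ) + 1) ≠ 0 := by positivity
  intro n
  induction n using Nat.twoStepInduction with
  | zero =>
      simp only [zero_add, Finset.sum_range_one, Nat.cast_zero, Int.cast_zero]
      rw [h0]
      field_simp
      ring
  | one =>
      have key := hrec 0 le_rfl 1
      norm_num [hm1, h0] at key
      simp only [Finset.sum_range_succ, Finset.sum_range_one]
      push_cast
      have h1 : (2 * (0:ℝ) + 2 * j + 1) ≠ 0 := by positivity
      have h2 : (2 * (1:ℝ) + 2 * j + 1) ≠ 0 := by positivity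
      have h3 : ((3:ℝ)/2 + j) ≠ 0 := by positivity
      have hA1 : A 1 1 = (4 * (j:ℝ) + 4) / (2 * j + 3) := by
        rw [eq_div_iff (by positivity)]
        nlinarith [key]
      rw [hA1]
      field_simp
      ring
  | more n ih1 ih2 =>
      have key := hrec ((n:ℤ) + 1) (by positivity) 1
      have e1 : ((n:ℤ) + 1 + 1) = ((n + 2 : ℕ) : ℤ) := by push_cast; ring
      have e2 : ((n:ℤ) + 1 - 1) = ((n : ℕ) : ℤ) := by omega
      have e3 : ((n:ℤ) + 1) = ((n + 1 : ℕ) : ℤ) := by push_cast; ring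
      rw [e1, e2, e3] at key
      set S : ℝ := ∑ s ∈ Finset.range (n + 1), (1 : ℝ) / (2 * (s:ℝ) + 2 * j + 1) with hS
      have hsum2 : ∑ s ∈ Finset.range (n + 2), (1 : ℝ) / (2 * (s:ℝ) + 2 * j + 1)
          = S + 1 / (2 * ((n:ℝ)+1) + 2 * j + 1) := by
        rw [Finset.sum_range_succ, ← hS]; push_cast; ring_nf
      have hsum3 : ∑ s ∈ Finset.range (n + 3), (1 : ℝ) / (2 * (s:ℝ) + 2 * j + 1)
          = S + 1 / (2 * ((n:ℝ)+1) + 2 * j + 1) + 1 / (2 * ((n:ℝ)+2) + 2 * j + 1) := by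
        rw [Finset.sum_range_succ, hsum2]; push_cast; ring_nf
      rw [hsum2] at ih2
      have hgoal : (n + 2 : ℕ) + 1 = n + 3 := by ring
      rw [hgoal, hsum3]
      rw [ih1, ih2] at key
      push_cast at key
      have hd1 : (2 * ((n:ℝ)+1) + 2 * j + 1) ≠ 0 := by positivity
      have hd2 : (2 * ((n:ℝ)+2) + 2 * j + 1) ≠ 0 := by positivity
      have hc : ((n:ℝ) + 1 + 3/2 + j) ≠ 0 := by positivity
      rw [eq_comm, ← sub_eq_zero]
      have key' : A (((n:ℕ)+2 : ℕ) : ℤ) 1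
          = (((n:ℝ) + 1 + j + 1) * (1 + 1) * ((2 * j + 1) * (S + 1 / (2 * ((n:ℝ)+1) + 2 * j + 1)))
              - 1 * ((n:ℝ) + 1 + j + 1/2) * ((2 * j + 1) * S)) / ((n:ℝ) + 1 + 3/2 + j) := by
        rw [eq_div_iff hc]
        push_cast
        linarith [key]
      push_cast at key' ⊢
      rw [key']
      field_simp
      ring
end
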